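/- For each integer α ≥ 3, the function β ↦ t_S(α,β) is continuous on the interval [0,∞). -/

import Mathlib

/-- `ŝ(α,β) = ⌊√((2β + α + 1)/(4α))⌋`. -/
noncomputable def sHat (α : ℤ) (β : ℝ) : ℤ :=
  ⌊Real.sqrt ((2 * β + (α : ℝ) + 1) / (4 * (α : ℝ)))⌋

/-- `t_S(α,β) = 1 + α·ŝ(α,β) + (β + 1/2)/(2ŝ(α,β) + 1) - 1/2`, the continuous variant of the
PSD-throttling number of the balanced spider `T_{α,β}`. -/
noncomputable def tS (α : ℤ) (β : ℝ) : ℝ :=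
  1 + (α : ℝ) * (sHat α β : ℝ) + (β + 1 / 2) / (2 * (sHat α β : ℝ) + 1) - 1 / 2

/-- `t_P(α,β) = √(2(αβ + 1) + 1/4) - 1/2`, the continuous variant of the PSD-throttling
number of the path on `αβ + 1` vertices. -/
noncomputable def tP (α : ℤ) (β : ℝ) : ℝ :=
  Real.sqrt (2 * ((α : ℝ) * β + 1) + 1 / 4) - 1 / 2


/-! `ŝ(α,β)` is the floor of the continuous function `√((2β + α + 1)/(4α))` of `β`, so `t_S(α,·)`
is locally one of the continuous branches `β ↦ 1 + αn + (β + 1/2)/(2n + 1) - 1/2`. Where the floor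
jumps from `n - 1` to `n` we have `2β + 1 = α(4n² - 1)`, and there both branches take the value
`α(2n - 1/2) + 1/2`, so the branches glue continuously. -/

open Filter Topology Set

theorem continuousOn_floor_piecewise {X Y : Type*} [TopologicalSpace X] [TopologicalSpace Y]
    {s : Set X} {g : X → ℝ} {F : ℤ → X → Y} (hg : ContinuousOn g s)
    (hF : ∀ n, ContinuousOn (F n) s) (hglue : ∀ x ∈ s, ∀ n : ℤ, g x = n → F (n - 1) x = F n x) :
    ContinuousOn (fun x => F ⌊g x⌋ x) s := by
  intro x hx
  set n := ⌊g x⌋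
  rcases (Int.floor_le (g x)).eq_or_lt with hint | hfrac
  · set A := {y ∈ s | ⌊g y⌋ = n - 1}
    set B := {y ∈ s | ⌊g y⌋ = n}
    have hA : ContinuousWithinAt (fun x => F ⌊g x⌋ x) A x :=
      ((hF (n - 1) x hx).mono fun y hy => hy.1).congr (fun y hy => by rw [hy.2])
        (hglue x hx n hint.symm).symm
    have hB : ContinuousWithinAt (fun x => F ⌊g x⌋ x) B x :=
      ((hF n x hx).mono fun y hy => hy.1).congr (fun y hy => by rw [hy.2]) rfl
    have hnear : ∀ᶠ y in 𝓝[s] x, g y ∈ Ioo ((n - 1 : ℤ) : ℝ) ((n + 1 : ℤ) : ℝ) :=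
      hg x hx (Ioo_mem_nhds (by push_cast; linarith) (by push_cast; linarith))
    refine (hA.union hB).mono_of_mem_nhdsWithin ?_
    filter_upwards [hnear, self_mem_nhdsWithin] with y hy hys
    have h1 : n - 1 ≤ ⌊g y⌋ := Int.le_floor.2 hy.1.le
    have h2 : ⌊g y⌋ < n + 1 := Int.floor_lt.2 hy.2
    by_cases h : ⌊g y⌋ = n
    · exact Or.inr ⟨hys, h⟩
    · exact Or.inl ⟨hys, by omega⟩
  · have hconst : ∀ᶠ y in 𝓝[s] x, ⌊g y⌋ = n :=
      Eventually.mono (hg x hx (Ioo_mem_nhds hfrac (Int.lt_floor_add_one _))) fun y hy =>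
        Int.floor_eq_iff.2 ⟨hy.1.le, hy.2⟩
    exact (hF n x hx).congr_of_eventuallyEq (hconst.mono fun y hy => by simp only [hy]) rfl

noncomputable def tSBranch (α n : ℤ) (β : ℝ) : ℝ :=
  1 + (α : ℝ) * (n : ℝ) + (β + 1 / 2) / (2 * (n : ℝ) + 1) - 1 / 2

theorem tSBranch_sub_one_eq {α n : ℤ} {β : ℝ} (h : 2 * β + 1 = α * (4 * (n : ℝ) ^ 2 - 1)) :
    tSBranch α (n - 1) β = tSBranch α n β := by
  have hpred : 2 * (n : ℝ) - 1 ≠ 0 := by exact_mod_cast (show 2 * n - 1 ≠ 0 by omega)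
  have hsucc : 2 * (n : ℝ) + 1 ≠ 0 := by exact_mod_cast (show 2 * n + 1 ≠ 0 by omega)
  have hquot_pred : (β + 1 / 2) / (2 * (n : ℝ) - 1) = α * (2 * n + 1) / 2 := by
    rw [div_eq_iff hpred]; linear_combination h / 2
  have hquot : (β + 1 / 2) / (2 * (n : ℝ) + 1) = α * (2 * n - 1) / 2 := by
    rw [div_eq_iff hsucc]; linear_combination h / 2
  unfold tSBranch
  rw [Int.cast_sub, Int.cast_one, show 2 * ((n : ℝ) - 1) + 1 = 2 * n - 1 by ring, hquot_pred,
    hquot]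
  ring

theorem tSBranch_sub_one_eq_of_sqrt_eq {α n : ℤ} {β : ℝ} (hα : 0 < α)
    (hβ : 0 ≤ 2 * β + α + 1) (h : √((2 * β + α + 1) / (4 * α)) = n) :
    tSBranch α (n - 1) β = tSBranch α n β := by
  have hαR : (0 : ℝ) < α := by exact_mod_cast hα
  have hsq : (2 * β + α + 1) / (4 * α) = (n : ℝ) ^ 2 := by
    rw [← h, Real.sq_sqrt (by positivity)]
  refine tSBranch_sub_one_eq ?_
  field_simp at hsq
  linear_combination hsq

/-- For each integer `α ≥ 3`, the function `β ↦ t_S(α,β)` is continuous on `[0,∞)`. -/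
theorem stmt11 (α : ℤ) (hα : 3 ≤ α) :
    ContinuousOn (fun β : ℝ => tS α β) (Set.Ici (0 : ℝ)) := by
  have hαR : (3 : ℝ) ≤ α := by exact_mod_cast hα
  refine continuousOn_floor_piecewise (F := tSBranch α) ?_ (fun n => ?_) ?_
  · exact (Real.continuous_sqrt.comp (by fun_prop)).continuousOn
  · unfold tSBranch; fun_prop
  · intro β hβ n h
    exact tSBranch_sub_one_eq_of_sqrt_eq (by omega) (by linarith [mem_Ici.1 hβ]) h
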